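/- If a proper function β : ℝ² → ℝ ∪ {+∞} is supermodular, then its convex conjugate β* is submodular. -/

import Mathlib

/-- Convex conjugate of a function `β : ℝ × ℝ → EReal`. -/
noncomputable def convConj (β : ℝ × ℝ → EReal) (y : ℝ × ℝ) : EReal :=
  ⨆ x : ℝ × ℝ, ((x.1 * y.1 + x.2 * y.2 : ℝ) : EReal) - β x

/-- Submodularity on ℝ × ℝ (componentwise lattice order). -/
def Submodular2 (f : ℝ × ℝ → EReal) : Prop :=
  ∀ a b : ℝ × ℝ, f (a ⊔ b) + f (a ⊓ b) ≤ f a + f b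

/-- Supermodularity on ℝ × ℝ (componentwise lattice order). -/
def Supermodular2 (f : ℝ × ℝ → EReal) : Prop :=
  ∀ a b : ℝ × ℝ, f a + f b ≤ f (a ⊔ b) + f (a ⊓ b)

/-!
Write `σ (x₁, x₂) = (x₁, -x₂)`. On the product of two chains, supermodularity of `h` means that
`h` has increasing differences, so it is the same as submodularity of `h ∘ σ`; and since `σ` is an
involution preserving the pairing, `β* = (β ∘ σ)* ∘ σ`. It therefore suffices to show that the
conjugate of a submodular `g` is supermodular. For that, given `u` and `v`, the pair `u ⊔ v, u ⊓ v`
lowers `g u + g v`, while by the rearrangement inequality it raises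
`⟨u, c⟩ + ⟨v, d⟩` to at most `⟨u ⊔ v, c ⊔ d⟩ + ⟨u ⊓ v, c ⊓ d⟩`.
-/

open Function

lemma mul_add_mul_le_max_mul_max_add_min_mul_min {R : Type*} [CommRing R] [LinearOrder R]
    [IsStrictOrderedRing R] (a b c d : R) :
    a * c + b * d ≤ max a b * max c d + min a b * min c d := by
  rcases le_total a b with hab | hab <;> rcases le_total c d with hcd | hcd <;>
    simp only [max_eq_left, max_eq_right, min_eq_left, min_eq_right, hab, hcd] <;>
    nlinarith [mul_nonneg (sub_nonneg.2 hab) (sub_nonneg.2 hcd)]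

lemma EReal.sub_add_sub_comm {x y a b : EReal} (ha : a ≠ ⊥) (hb : b ≠ ⊥) :
    (x - a) + (y - b) = (x + y) - (a + b) := by
  simp only [sub_eq_add_neg, EReal.neg_add (Or.inl ha) (Or.inr hb), add_add_add_comm]

lemma coe_sub_le_convConj (g : ℝ × ℝ → EReal) (x y : ℝ × ℝ) :
    ((x.1 * y.1 + x.2 * y.2 : ℝ) : EReal) - g x ≤ convConj g y :=
  le_iSup (fun x : ℝ × ℝ => ((x.1 * y.1 + x.2 * y.2 : ℝ) : EReal) - g x) x

lemma Submodular2.supermodular2_convConj {g : ℝ × ℝ → EReal} (hg : Submodular2 g)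
    (hbot : ∀ x, g x ≠ ⊥) : Supermodular2 (convConj g) := by
  intro c d
  refine EReal.add_le_of_forall_lt fun s hs t ht => ?_
  obtain ⟨u, hu⟩ := lt_iSup_iff.1 hs
  obtain ⟨v, hv⟩ := lt_iSup_iff.1 ht
  have hpair : u.1 * c.1 + u.2 * c.2 + (v.1 * d.1 + v.2 * d.2) ≤
      (u ⊔ v).1 * (c ⊔ d).1 + (u ⊔ v).2 * (c ⊔ d).2 +
        ((u ⊓ v).1 * (c ⊓ d).1 + (u ⊓ v).2 * (c ⊓ d).2) := by
    have h₁ := mul_add_mul_le_max_mul_max_add_min_mul_min u.1 v.1 c.1 d.1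
    have h₂ := mul_add_mul_le_max_mul_max_add_min_mul_min u.2 v.2 c.2 d.2
    simp only [Prod.fst_sup, Prod.snd_sup, Prod.fst_inf, Prod.snd_inf]
    linarith
  calc s + t ≤ (((u.1 * c.1 + u.2 * c.2 : ℝ) : EReal) - g u) +
        (((v.1 * d.1 + v.2 * d.2 : ℝ) : EReal) - g v) := add_le_add hu.le hv.le
    _ ≤ ((((u ⊔ v).1 * (c ⊔ d).1 + (u ⊔ v).2 * (c ⊔ d).2 : ℝ) : EReal) - g (u ⊔ v)) +
        ((((u ⊓ v).1 * (c ⊓ d).1 + (u ⊓ v).2 * (c ⊓ d).2 : ℝ) : EReal) - g (u ⊓ v)) := by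
      rw [EReal.sub_add_sub_comm (hbot _) (hbot _),
        EReal.sub_add_sub_comm (hbot _) (hbot _), ← EReal.coe_add, ← EReal.coe_add]
      exact EReal.sub_le_sub (EReal.coe_le_coe_iff.2 hpair) (hg u v)
    _ ≤ convConj g (c ⊔ d) + convConj g (c ⊓ d) :=
      add_le_add (coe_sub_le_convConj g _ _) (coe_sub_le_convConj g _ _)

def negSnd (x : ℝ × ℝ) : ℝ × ℝ := (x.1, -x.2)

lemma negSnd_involutive : Involutive negSnd := fun x => by simp [negSnd]

lemma convConj_comp_negSnd (h : ℝ × ℝ → EReal) :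
    convConj (h ∘ negSnd) = convConj h ∘ negSnd := by
  ext y
  rw [comp_apply, convConj, convConj, ← negSnd_involutive.surjective.iSup_comp]
  simp only [comp_apply, negSnd, neg_neg]
  congr! 4 with x
  ring

lemma Supermodular2.submodular2_comp_negSnd {h : ℝ × ℝ → EReal} (hh : Supermodular2 h) :
    Submodular2 (h ∘ negSnd) := by
  intro a b
  wlog h₁ : a.1 ≤ b.1 generalizing a b
  · simpa only [sup_comm, inf_comm, add_comm] using this b a (le_of_not_ge h₁)
  obtain ⟨a₁, a₂⟩ := a
  obtain ⟨b₁, b₂⟩ := b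
  simp only [Prod.mk_sup_mk, Prod.mk_inf_mk, sup_eq_right.2 h₁, inf_eq_left.2 h₁, comp_apply,
    negSnd] at h₁ ⊢
  rcases le_total a₂ b₂ with h₂ | h₂
  · rw [sup_eq_right.2 h₂, inf_eq_left.2 h₂, add_comm]
  · -- `(b₁, -a₂)` and `(a₁, -b₂)` are the other two corners of the rectangle with corners `σ a`, `σ b`
    simpa only [Prod.mk_sup_mk, Prod.mk_inf_mk, neg_le_neg_iff, h₁, h₂, sup_of_le_left,
      sup_of_le_right, inf_of_le_left, inf_of_le_right, add_comm] using hh (b₁, -a₂) (a₁, -b₂)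

theorem supermodular_convConj_submodular_general (β : ℝ × ℝ → EReal)
    (hproper₁ : ∀ x, β x ≠ ⊥)
    (hsup : Supermodular2 β) : Submodular2 (convConj β) := by
  have hconj : Supermodular2 (convConj (β ∘ negSnd)) :=
    hsup.submodular2_comp_negSnd.supermodular2_convConj fun _ => hproper₁ _
  have hβ : convConj β = convConj (β ∘ negSnd) ∘ negSnd := by
    rw [convConj_comp_negSnd, comp_assoc, negSnd_involutive.comp_self, comp_id]
  rw [hβ]
  exact hconj.submodular2_comp_negSnd

theorem supermodular_convConj_submodular (β : ℝ × ℝ → EReal)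
    (hproper₁ : ∀ x, β x ≠ ⊥) (hproper₂ : ∃ x, β x ≠ ⊤)
    (hsup : Supermodular2 β) : Submodular2 (convConj β) :=
  supermodular_convConj_submodular_general β hproper₁ hsup
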